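/- arXiv:1710.08590 — 2 statements merged into one kernel-verified Lean document; each statement's English description precedes it below -/
import Mathlib

section
/- The functional F_{ai}(b_a, b_i) = ∫ b_a(x_a) ln b_a(x_a) dx_a − ∫ b_a(x_i) ln b_i(x_i) dx_i, where b_a(x_i) = ∫ b_a(x_a) dx_a\x_i is the marginal of b_a, is jointly convex in (b_a, b_i): for any perturbation (b̃_a, b̃_i), the quadratic form of its Hessian satisfies ∫ b̃_a(x_a)²/b_a(x_a) dx_a − 2∫ b̃_a(x_i) b̃_i(x_i)/b_i(x_i) dx_i + ∫ b_a(x_i) b̃_i(x_i)²/b_i(x_i)² dx_i = ∫ b_a(x_a) (b̃_a(x_a)/b_a(x_a) − b̃_i(x_i)/b_i(x_i))² dx_a ≥ 0. -/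
open MeasureTheory Real

/-- Key step of Proposition 1: for a positive joint density `ba` on `α × β` with marginal
consistency `bi x = ∫ y, ba (y, x)`, the Hessian quadratic form of the functional
`F_{ai}(b_a, b_i) = ∫ b_a ln b_a − ∫ b_a(x_i) ln b_i(x_i)` at a perturbation `(tba, tbi)`
satisfies
`∫ tba²/ba − 2 ∫ (marg tba)·tbi/bi + ∫ (marg ba)·tbi²/bi²
  = ∫ ba·(tba/ba − tbi/bi)² ≥ 0`. -/
theorem bethe_pairwise_term_convex {α β : Type*} [MeasurableSpace α] [MeasurableSpace β]
    (μ : Measure α) (ν : Measure β) [SigmaFinite μ] [SigmaFinite ν]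
    (ba tba : α × β → ℝ) (bi tbi : β → ℝ)
    (hba : ∀ q, 0 < ba q) (hbi : ∀ x, 0 < bi x)
    (hmarg : ∀ x, bi x = ∫ y, ba (y, x) ∂μ)
    (hint₁ : Integrable (fun q => (tba q) ^ 2 / ba q) (μ.prod ν))
    (hint₂ : Integrable (fun x => (∫ y, tba (y, x) ∂μ) * tbi x / bi x) ν)
    (hint₃ : Integrable (fun x => (∫ y, ba (y, x) ∂μ) * (tbi x) ^ 2 / (bi x) ^ 2) ν)
    (hint₄ : Integrable
      (fun q => ba q * (tba q / ba q - tbi q.2 / bi q.2) ^ 2) (μ.prod ν)) :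
    (∫ q, (tba q) ^ 2 / ba q ∂(μ.prod ν))
        - 2 * ∫ x, (∫ y, tba (y, x) ∂μ) * tbi x / bi x ∂ν
        + ∫ x, (∫ y, ba (y, x) ∂μ) * (tbi x) ^ 2 / (bi x) ^ 2 ∂ν =
      ∫ q, ba q * (tba q / ba q - tbi q.2 / bi q.2) ^ 2 ∂(μ.prod ν) ∧
    0 ≤ ∫ q, ba q * (tba q / ba q - tbi q.2 / bi q.2) ^ 2 ∂(μ.prod ν) := by
  have hg : Integrable (fun q => ba q * (tba q / ba q - tbi q.2 / bi q.2) ^ 2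
      - (tba q) ^ 2 / ba q) (μ.prod ν) := hint₄.sub hint₁
  have hpt : ∀ q : α × β, ba q * (tba q / ba q - tbi q.2 / bi q.2) ^ 2
      - (tba q) ^ 2 / ba q
      = ba q * ((tbi q.2) ^ 2 / (bi q.2) ^ 2)
        + (-2 * (tbi q.2 / bi q.2)) * tba q := by
    intro q
    have h1 := (hba q).ne'
    have h2 := (hbi q.2).ne'
    field_simp
    ring
  have hbaslice : ∀ x, Integrable (fun y => ba (y, x)) μ := by
    intro x
    by_contra h
    have := hmarg x
    rw [integral_undef h] at this
    exact (hbi x).ne' this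
  have key : ∫ q, (ba q * (tba q / ba q - tbi q.2 / bi q.2) ^ 2
      - (tba q) ^ 2 / ba q) ∂(μ.prod ν)
      = ∫ x, ((∫ y, ba (y, x) ∂μ) * (tbi x) ^ 2 / (bi x) ^ 2
          - 2 * ((∫ y, tba (y, x) ∂μ) * tbi x / bi x)) ∂ν := by
    rw [integral_prod_symm _ hg]
    refine integral_congr_ae ?_
    filter_upwards [hg.prod_left_ae] with x hx
    have hx' : Integrable (fun y => ba (y, x) * ((tbi x) ^ 2 / (bi x) ^ 2)
        + (-2 * (tbi x / bi x)) * tba (y, x)) μ := hx.congr (ae_of_all _ fun y => hpt (y, x))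
    have hA : Integrable (fun y => ba (y, x) * ((tbi x) ^ 2 / (bi x) ^ 2)) μ :=
      (hbaslice x).mul_const _
    have hB : Integrable (fun y => (-2 * (tbi x / bi x)) * tba (y, x)) μ := by
      have h := hx'.sub hA
      refine h.congr (ae_of_all _ fun y => ?_)
      simp
    calc ∫ y, (ba (y, x) * (tba (y, x) / ba (y, x) - tbi x / bi x) ^ 2
          - (tba (y, x)) ^ 2 / ba (y, x)) ∂μ
        = ∫ y, (ba (y, x) * ((tbi x) ^ 2 / (bi x) ^ 2)
            + (-2 * (tbi x / bi x)) * tba (y, x)) ∂μ := by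
          exact integral_congr_ae (ae_of_all _ fun y => hpt (y, x))
      _ = (∫ y, ba (y, x) ∂μ) * ((tbi x) ^ 2 / (bi x) ^ 2)
            + (-2 * (tbi x / bi x)) * ∫ y, tba (y, x) ∂μ := by
          rw [integral_add hA hB, integral_mul_const, integral_const_mul]
      _ = (∫ y, ba (y, x) ∂μ) * (tbi x) ^ 2 / (bi x) ^ 2
            - 2 * ((∫ y, tba (y, x) ∂μ) * tbi x / bi x) := by ring
  have hsub1 : ∫ q, (ba q * (tba q / ba q - tbi q.2 / bi q.2) ^ 2
      - (tba q) ^ 2 / ba q) ∂(μ.prod ν)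
      = (∫ q, ba q * (tba q / ba q - tbi q.2 / bi q.2) ^ 2 ∂(μ.prod ν))
        - ∫ q, (tba q) ^ 2 / ba q ∂(μ.prod ν) := integral_sub hint₄ hint₁
  have hsub2 : ∫ x, ((∫ y, ba (y, x) ∂μ) * (tbi x) ^ 2 / (bi x) ^ 2
      - 2 * ((∫ y, tba (y, x) ∂μ) * tbi x / bi x)) ∂ν
      = (∫ x, (∫ y, ba (y, x) ∂μ) * (tbi x) ^ 2 / (bi x) ^ 2 ∂ν)
        - 2 * ∫ x, (∫ y, tba (y, x) ∂μ) * tbi x / bi x ∂ν := by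
    rw [integral_sub hint₃ (hint₂.const_mul 2), integral_const_mul]
  constructor
  · rw [hsub1, hsub2] at key
    linarith
  · exact integral_nonneg fun q => mul_nonneg (hba q).le (sq_nonneg _)
end

section
/- If there exist nonnegative real numbers c_{aa}, c_{ii}, c_{ia} such that c_a = c_{aa} + Σ_{i∈N(a)} c_{ia} and c_i = c_{ii} − Σ_{a∈N(i)} c_{ia}, then the generalized free energy F(b) = −Σ_a ∫ b_a ln f_a − Σ_a c_a H_a(b) − Σ_i c_i H_i(b) is convex in the beliefs (b_a, b_i), where H_a(b) = −∫ b_a ln b_a and H_i(b) = −∫ b_i ln b_i, under the marginalization constraints b_i(x_i) = ∫ b_a dx_a\x_i. -/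
/-!
Substituting `cA = caa + ∑ cia` and `cV = cii - ∑ cia` and charging each `cia i a` to the
edge `(a, i)`, the entropic part of `F` becomes
`∑ caa · (-H_a) + ∑ cii · (-H_i) + ∑_{i ∈ N a} cia · (H_i - H_a)`.
The first two sums are convex since `x log x` is. Under the constraint that `b_i` is the
marginal of `b_a`, `H_i - H_a = -∑_x b_a(x) log (b_a(x) / b_i(x_i))` is minus a conditional
entropy, and it is convex because `(p, P) ↦ p log (p / P)`, the perspective of `x log x`, is
jointly convex.
-/

open Real Finset

theorem convexOn_mul_log_div :
    ConvexOn ℝ (Set.Ioi 0 ×ˢ Set.Ioi 0) fun q : ℝ × ℝ => q.1 * log (q.1 / q.2) := by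
  refine ⟨(convex_Ioi 0).prod (convex_Ioi 0), ?_⟩
  rintro ⟨p, P⟩ ⟨hp, hP⟩ ⟨q, Q⟩ ⟨hq, hQ⟩ a b ha hb hab
  simp only [Set.mem_Ioi] at hp hP hq hQ
  simp only [Prod.smul_mk, Prod.mk_add_mk, smul_eq_mul]
  have hM : 0 < a * P + b * Q := convex_Ioi (0 : ℝ) hP hQ ha hb hab
  have hweights : a * P / (a * P + b * Q) + b * Q / (a * P + b * Q) = 1 := by
    rw [← add_div, div_self hM.ne']
  have hratio : (a * p + b * q) / (a * P + b * Q)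
      = a * P / (a * P + b * Q) * (p / P) + b * Q / (a * P + b * Q) * (q / Q) := by
    field_simp
  have hjensen := convexOn_mul_log.2 (div_pos hp hP).le (div_pos hq hQ).le
    (by positivity) (by positivity) hweights
  simp only [smul_eq_mul, ← hratio] at hjensen
  calc (a * p + b * q) * log ((a * p + b * q) / (a * P + b * Q))
      = (a * P + b * Q) * ((a * p + b * q) / (a * P + b * Q)
          * log ((a * p + b * q) / (a * P + b * Q))) := by field_simp
    _ ≤ (a * P + b * Q) * (a * P / (a * P + b * Q) * (p / P * log (p / P))
          + b * Q / (a * P + b * Q) * (q / Q * log (q / Q))) := by gcongr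
    _ = a * (p * log (p / P)) + b * (q * log (q / Q)) := by field_simp

theorem convexOn_sum_mul_log {ι : Type*} [Fintype ι] :
    ConvexOn ℝ (Set.Ici 0) fun p : ι → ℝ => ∑ x, p x * log (p x) := by
  refine ⟨convex_Ici 0, fun p hp q hq a b ha hb hab => ?_⟩
  simp only [smul_eq_mul, mul_sum, ← sum_add_distrib, Pi.add_apply, Pi.smul_apply]
  exact sum_le_sum fun x _ => convexOn_mul_log.2 (hp x) (hq x) ha hb hab

theorem ConvexOn.sum {𝕜 E β ι : Type*} [Semiring 𝕜] [PartialOrder 𝕜] [AddCommMonoid E]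
    [AddCommMonoid β] [PartialOrder β] [IsOrderedAddMonoid β] [SMul 𝕜 E] [Module 𝕜 β]
    {s : Set E} {u : Finset ι} {f : ι → E → β} (hs : Convex 𝕜 s)
    (hf : ∀ k ∈ u, ConvexOn 𝕜 s (f k)) : ConvexOn 𝕜 s fun x => ∑ k ∈ u, f k x := by
  classical
  induction u using Finset.induction_on with
  | empty => simpa using convexOn_const 0 hs
  | insert k u hk ih =>
    simp only [sum_insert hk]
    exact (hf k (mem_insert_self k u)).add (ih fun j hj => hf j (mem_insert_of_mem hj))

section Marginal

variable {X S : Type*} [Fintype X] [DecidableEq S]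

def marginal (g : X → S) : (X → ℝ) →ₗ[ℝ] S → ℝ where
  toFun b s := ∑ x ∈ univ.filter (fun x => g x = s), b x
  map_add' b c := by ext s; simp [sum_add_distrib]
  map_smul' r b := by ext s; simp [mul_sum]

theorem marginal_pos {g : X → S} {b : X → ℝ} (hb : ∀ x, 0 < b x) (x : X) :
    0 < marginal g b (g x) :=
  sum_pos (fun y _ => hb y) ⟨x, mem_filter.2 ⟨mem_univ x, rfl⟩⟩

variable [Fintype S]

theorem sum_marginal_mul (g : X → S) (b : X → ℝ) (h : S → ℝ) :
    ∑ s, marginal g b s * h s = ∑ x, b x * h (g x) := by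
  simp only [marginal, LinearMap.coe_mk, AddHom.coe_mk, sum_mul]
  rw [← sum_fiberwise univ g fun x => b x * h (g x)]
  exact sum_congr rfl fun s _ => sum_congr rfl fun x hx => by rw [(mem_filter.1 hx).2]

theorem sum_mul_log_sub_sum_marginal_mul_log {g : X → S} {b : X → ℝ} (hb : ∀ x, 0 < b x) :
    ∑ x, b x * log (b x) - ∑ s, marginal g b s * log (marginal g b s)
      = ∑ x, b x * log (b x / marginal g b (g x)) := by
  rw [sum_marginal_mul, ← sum_sub_distrib]
  exact sum_congr rfl fun x _ => by
    rw [log_div (hb x).ne' (marginal_pos hb x).ne', mul_sub]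

theorem convexOn_sum_mul_log_sub_sum_marginal_mul_log (g : X → S) :
    ConvexOn ℝ (Set.univ.pi fun _ => Set.Ioi 0) fun b : X → ℝ =>
      ∑ x, b x * log (b x) - ∑ s, marginal g b s * log (marginal g b s) := by
  refine ⟨convex_pi fun _ _ => convex_Ioi 0, fun b hb c hc α β hα hβ hαβ => ?_⟩
  simp only [Set.mem_univ_pi, Set.mem_Ioi] at hb hc
  have hmix : ∀ x, 0 < (α • b + β • c) x := fun x =>
    convex_Ioi (0 : ℝ) (hb x) (hc x) hα hβ hαβ
  dsimp only
  rw [sum_mul_log_sub_sum_marginal_mul_log hmix, sum_mul_log_sub_sum_marginal_mul_log hb,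
    sum_mul_log_sub_sum_marginal_mul_log hc, smul_eq_mul, smul_eq_mul, mul_sum, mul_sum,
    ← sum_add_distrib]
  refine sum_le_sum fun x _ => ?_
  have := convexOn_mul_log_div.2 (x := (b x, marginal g b (g x)))
    ⟨hb x, marginal_pos hb x⟩ (y := (c x, marginal g c (g x))) ⟨hc x, marginal_pos hc x⟩
    hα hβ hαβ
  simpa only [map_add, map_smul, Pi.add_apply, Pi.smul_apply, smul_eq_mul, Prod.smul_mk,
    Prod.mk_add_mk] using this

end Marginal

theorem sum_countingNumbers_mul_eq {A V : Type*} [Fintype A] [Fintype V]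
    {N : A → Finset V} {M : V → Finset A} (hNM : ∀ a i, i ∈ N a ↔ a ∈ M i)
    (caa : A → ℝ) (cii : V → ℝ) (cia : V → A → ℝ) (u : A → ℝ) (v : V → ℝ) :
    ∑ a, (caa a + ∑ i ∈ N a, cia i a) * u a + ∑ i, (cii i - ∑ a ∈ M i, cia i a) * v i
      = ∑ a, caa a * u a + ∑ i, cii i * v i + ∑ a, ∑ i ∈ N a, cia i a * (u a - v i) := by
  have hswap : ∑ a, ∑ i ∈ N a, cia i a * v i = ∑ i, ∑ a ∈ M i, cia i a * v i :=
    sum_comm' fun a i => by simp [hNM a i]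
  simp only [add_mul, sub_mul, sum_mul, mul_sub, sum_add_distrib, sum_sub_distrib, hswap]
  ring

section FactorGraph

variable {A V S : Type*} [Fintype V] [Fintype S] [DecidableEq V] [DecidableEq S]

abbrev Beliefs (A V S : Type*) := (A → (V → S) → ℝ) × (V → S → ℝ)

def factorBelief (a : A) : Beliefs A V S →ₗ[ℝ] (V → S) → ℝ :=
  (LinearMap.proj a).comp (LinearMap.fst ℝ _ _)

def variableBelief (i : V) : Beliefs A V S →ₗ[ℝ] S → ℝ :=
  (LinearMap.proj i).comp (LinearMap.snd ℝ _ _)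

def consistentBeliefs (N : A → Finset V) : Set (Beliefs A V S) :=
  {p | (∀ a x, 0 < p.1 a x) ∧ (∀ i s, 0 < p.2 i s) ∧
    ∀ a, ∀ i ∈ N a, p.2 i = marginal (fun x => x i) (p.1 a)}

theorem convex_consistentBeliefs (N : A → Finset V) :
    Convex ℝ (consistentBeliefs (S := S) N) := by
  rintro p ⟨hpa, hpi, hpm⟩ q ⟨hqa, hqi, hqm⟩ α β hα hβ hαβ
  refine ⟨fun a x => convex_Ioi (0 : ℝ) (hpa a x) (hqa a x) hα hβ hαβ,
    fun i s => convex_Ioi (0 : ℝ) (hpi i s) (hqi i s) hα hβ hαβ, fun a i hi => ?_⟩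
  simp only [Prod.fst_add, Prod.snd_add, Prod.smul_fst, Prod.smul_snd, Pi.add_apply,
    Pi.smul_apply, map_add, map_smul, hpm a i hi, hqm a i hi]

variable [Fintype A]

noncomputable def generalizedFreeEnergy (f : A → (V → S) → ℝ) (cA : A → ℝ)
    (cV : V → ℝ) (p : Beliefs A V S) : ℝ :=
  -(∑ a, ∑ x, p.1 a x * log (f a x))
    - ∑ a, cA a * -(∑ x, p.1 a x * log (p.1 a x))
    - ∑ i, cV i * -(∑ s, p.2 i s * log (p.2 i s))

theorem convexOn_generalizedFreeEnergy {N : A → Finset V} {M : V → Finset A}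
    (hNM : ∀ a i, i ∈ N a ↔ a ∈ M i) (f : A → (V → S) → ℝ)
    {caa : A → ℝ} {cii : V → ℝ} {cia : V → A → ℝ}
    (hcaa : ∀ a, 0 ≤ caa a) (hcii : ∀ i, 0 ≤ cii i) (hcia : ∀ i a, 0 ≤ cia i a) :
    ConvexOn ℝ (consistentBeliefs N) (generalizedFreeEnergy f
      (fun a => caa a + ∑ i ∈ N a, cia i a) (fun i => cii i - ∑ a ∈ M i, cia i a)) := by
  have hD := convex_consistentBeliefs (S := S) N
  have hEnergy : ConvexOn ℝ (consistentBeliefs N)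
      fun p => -∑ a, ∑ x, p.1 a x * log (f a x) := by
    refine ⟨hD, fun p _ q _ α β _ _ _ => le_of_eq ?_⟩
    simp only [Prod.fst_add, Prod.smul_fst, Pi.add_apply, Pi.smul_apply, smul_eq_mul, add_mul,
      sum_add_distrib, mul_assoc, ← mul_sum]
    ring
  have hFactor : ConvexOn ℝ (consistentBeliefs N)
      fun p => ∑ a, caa a * ∑ x, p.1 a x * log (p.1 a x) :=
    ConvexOn.sum hD fun a _ => ((convexOn_sum_mul_log.comp_linearMap
      (factorBelief a)).subset
        (fun p hp x => (hp.1 a x).le) hD).smul (hcaa a)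
  have hVariable : ConvexOn ℝ (consistentBeliefs N)
      fun p => ∑ i, cii i * ∑ s, p.2 i s * log (p.2 i s) :=
    ConvexOn.sum hD fun i _ => ((convexOn_sum_mul_log.comp_linearMap
      (variableBelief i)).subset
        (fun p hp s => (hp.2.1 i s).le) hD).smul (hcii i)
  have hConditional : ConvexOn ℝ (consistentBeliefs N)
      fun p => ∑ a, ∑ i ∈ N a, cia i a * (∑ x, p.1 a x * log (p.1 a x)
        - ∑ s, marginal (fun x => x i) (p.1 a) s * log (marginal (fun x => x i) (p.1 a) s)) :=
    ConvexOn.sum hD fun a _ => ConvexOn.sum hD fun i _ =>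
      (((convexOn_sum_mul_log_sub_sum_marginal_mul_log fun x : V → S => x i).comp_linearMap
        (factorBelief a)).subset
          (fun p hp => Set.mem_univ_pi.2 fun x => hp.1 a x) hD).smul (hcia i a)
  refine (hEnergy.add (hFactor.add (hVariable.add hConditional))).congr fun p hp => ?_
  simp only [generalizedFreeEnergy, Pi.add_apply, mul_neg, sum_neg_distrib, sub_neg_eq_add]
  rw [add_assoc, sum_countingNumbers_mul_eq hNM]
  congr 1
  rw [← add_assoc]
  congr 1
  exact sum_congr rfl fun a _ => sum_congr rfl fun i hi => by rw [hp.2.2 a i hi]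

end FactorGraph

theorem generalized_free_energy_convex_general
    {A V S : Type*} [Fintype A] [Fintype V] [Fintype S] [DecidableEq V] [DecidableEq S]
    (N : A → Finset V) (M : V → Finset A) (hNM : ∀ a i, i ∈ N a ↔ a ∈ M i)
    (f : A → (V → S) → ℝ)
    (caa : A → ℝ) (cii : V → ℝ) (cia : V → A → ℝ)
    (hcaa : ∀ a, 0 ≤ caa a) (hcii : ∀ i, 0 ≤ cii i) (hcia : ∀ i a, 0 ≤ cia i a)
    (cA : A → ℝ) (cV : V → ℝ)
    (hcA : ∀ a, cA a = caa a + ∑ i ∈ N a, cia i a)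
    (hcV : ∀ i, cV i = cii i - ∑ a ∈ M i, cia i a)
    (F : (A → (V → S) → ℝ) → (V → S → ℝ) → ℝ)
    (hF : ∀ ba bi, F ba bi =
      -(∑ a, ∑ x, ba a x * Real.log (f a x))
        - ∑ a, cA a * -(∑ x, ba a x * Real.log (ba a x))
        - ∑ i, cV i * -(∑ s, bi i s * Real.log (bi i s)))
    (ba₀ ba₁ : A → (V → S) → ℝ) (bi₀ bi₁ : V → S → ℝ)
    (hpos₀a : ∀ a x, 0 < ba₀ a x) (hpos₁a : ∀ a x, 0 < ba₁ a x)
    (hpos₀i : ∀ i s, 0 < bi₀ i s) (hpos₁i : ∀ i s, 0 < bi₁ i s)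
    (hmarg₀ : ∀ a, ∀ i ∈ N a, ∀ s,
      bi₀ i s = ∑ x ∈ Finset.univ.filter (fun x => x i = s), ba₀ a x)
    (hmarg₁ : ∀ a, ∀ i ∈ N a, ∀ s,
      bi₁ i s = ∑ x ∈ Finset.univ.filter (fun x => x i = s), ba₁ a x)
    (t : ℝ) (ht₀ : 0 ≤ t) (ht₁ : t ≤ 1) :
    F (fun a x => t * ba₁ a x + (1 - t) * ba₀ a x)
        (fun i s => t * bi₁ i s + (1 - t) * bi₀ i s) ≤
      t * F ba₁ bi₁ + (1 - t) * F ba₀ bi₀ := by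
  obtain rfl : cA = fun a => caa a + ∑ i ∈ N a, cia i a := funext hcA
  obtain rfl : cV = fun i => cii i - ∑ a ∈ M i, cia i a := funext hcV
  have hF' : ∀ ba bi, F ba bi = generalizedFreeEnergy f _ _ (ba, bi) := hF
  have h₀ : (ba₀, bi₀) ∈ consistentBeliefs N :=
    ⟨hpos₀a, hpos₀i, fun a i hi => funext (hmarg₀ a i hi)⟩
  have h₁ : (ba₁, bi₁) ∈ consistentBeliefs N :=
    ⟨hpos₁a, hpos₁i, fun a i hi => funext (hmarg₁ a i hi)⟩
  rw [hF', hF', hF']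
  exact (convexOn_generalizedFreeEnergy hNM f hcaa hcii hcia).2 h₁ h₀ ht₀ (sub_nonneg.2 ht₁)
    (add_sub_cancel t 1)

/-- Proposition 1 (finite-state version). Factor nodes `A` with neighbor sets `N a ⊆ V`,
variable nodes `V` (neighbor sets `M i ⊆ A`), positive factors `f a`, and counting
numbers `cA a = caa a + ∑_{i ∈ N a} cia i a`, `cV i = cii i − ∑_{a ∈ M i} cia i a` with
`caa, cii, cia ≥ 0`. Then the generalized free energy
`F(b) = −∑_a ∑_x b_a(x) ln f_a(x) − ∑_a cA a · H_a(b) − ∑_i cV i · H_i(b)`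
is convex on positive beliefs satisfying the marginalization constraints
`b_i(s) = ∑_{x : x i = s} b_a(x)` for `i ∈ N a`. -/
theorem generalized_free_energy_convex
    {A V S : Type*} [Fintype A] [Fintype V] [Fintype S] [DecidableEq V] [DecidableEq S]
    (N : A → Finset V) (M : V → Finset A) (hNM : ∀ a i, i ∈ N a ↔ a ∈ M i)
    (f : A → (V → S) → ℝ) (hf : ∀ a x, 0 < f a x)
    (caa : A → ℝ) (cii : V → ℝ) (cia : V → A → ℝ)
    (hcaa : ∀ a, 0 ≤ caa a) (hcii : ∀ i, 0 ≤ cii i) (hcia : ∀ i a, 0 ≤ cia i a)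
    (cA : A → ℝ) (cV : V → ℝ)
    (hcA : ∀ a, cA a = caa a + ∑ i ∈ N a, cia i a)
    (hcV : ∀ i, cV i = cii i - ∑ a ∈ M i, cia i a)
    (F : (A → (V → S) → ℝ) → (V → S → ℝ) → ℝ)
    (hF : ∀ ba bi, F ba bi =
      -(∑ a, ∑ x, ba a x * Real.log (f a x))
        - ∑ a, cA a * -(∑ x, ba a x * Real.log (ba a x))
        - ∑ i, cV i * -(∑ s, bi i s * Real.log (bi i s)))
    (ba₀ ba₁ : A → (V → S) → ℝ) (bi₀ bi₁ : V → S → ℝ)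
    (hpos₀a : ∀ a x, 0 < ba₀ a x) (hpos₁a : ∀ a x, 0 < ba₁ a x)
    (hpos₀i : ∀ i s, 0 < bi₀ i s) (hpos₁i : ∀ i s, 0 < bi₁ i s)
    (hnorm₀ : ∀ a, ∑ x, ba₀ a x = 1) (hnorm₁ : ∀ a, ∑ x, ba₁ a x = 1)
    (hnorm₀i : ∀ i, ∑ s, bi₀ i s = 1) (hnorm₁i : ∀ i, ∑ s, bi₁ i s = 1)
    (hmarg₀ : ∀ a, ∀ i ∈ N a, ∀ s,
      bi₀ i s = ∑ x ∈ Finset.univ.filter (fun x => x i = s), ba₀ a x)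
    (hmarg₁ : ∀ a, ∀ i ∈ N a, ∀ s,
      bi₁ i s = ∑ x ∈ Finset.univ.filter (fun x => x i = s), ba₁ a x)
    (t : ℝ) (ht₀ : 0 ≤ t) (ht₁ : t ≤ 1) :
    F (fun a x => t * ba₁ a x + (1 - t) * ba₀ a x)
        (fun i s => t * bi₁ i s + (1 - t) * bi₀ i s) ≤
      t * F ba₁ bi₁ + (1 - t) * F ba₀ bi₀ :=
  generalized_free_energy_convex_general N M hNM f caa cii cia hcaa hcii hcia cA cV hcA hcV F hF ba₀
    ba₁ bi₀ bi₁ hpos₀a hpos₁a hpos₀i hpos₁i hmarg₀ hmarg₁ t ht₀ ht₁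
end
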